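/- Let G be a finite simple graph that is uniquely half-covered. Then G has a half-integral perfect matching, i.e., a function m : E(G) → {0, 1/2, 1} with Σ_{w ∈ N_G(v)} m(vw) = 1 for every vertex v. -/
import Mathlib


namespace Stmt

/-- `G` is uniquely half-covered: the only half-integral fractional vertex cover of total
weight at most `|V|/2` is the constant `1/2` function. -/
def UniquelyHalfCovered {V : Type} [Fintype V] (G : SimpleGraph V) : Prop :=
  ∀ f : V → ℝ, (∀ v, f v ∈ ({0, 1/2, 1} : Set ℝ)) →
    (∀ ⦃u v⦄, G.Adj u v → 1 ≤ f u + f v) →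
    (∑ v, f v) ≤ (Fintype.card V : ℝ) / 2 →
    f = fun _ => (1/2 : ℝ)

/-- A uniquely half-covered finite graph has a half-integral perfect fractional matching:
a weighting of the edges with values in `{0, 1/2, 1}` such that at every vertex the weights
of the incident edges sum to `1`. -/
theorem halfIntegral_perfect_matching_of_uniquelyHalfCovered {V : Type} [Fintype V]
    [DecidableEq V] (G : SimpleGraph V) [DecidableRel G.Adj]
    (h : UniquelyHalfCovered G) :
    ∃ m : Sym2 V → ℝ, (∀ e ∈ G.edgeSet, m e ∈ ({0, 1/2, 1} : Set ℝ)) ∧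
      ∀ v : V, ∑ w ∈ G.neighborFinset v, m s(v, w) = 1 := by
  -- Step 1: Hall's condition for the neighborhood system.
  have hall : ∀ S : Finset V, S.card ≤ (S.biUnion (fun v => G.neighborFinset v)).card := by
    intro S
    by_contra hc
    push_neg at hc
    set N := S.biUnion (fun v => G.neighborFinset v) with hN
    set f : V → ℝ := fun v =>
      ((if v ∈ N then 1 else 0) + 1 - (if v ∈ S then 1 else 0)) / 2 with hf
    have hmem : ∀ v, f v ∈ ({0, 1/2, 1} : Set ℝ) := by
      intro v
      simp only [hf, Set.mem_insert_iff, Set.mem_singleton_iff]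
      by_cases h1 : v ∈ N <;> by_cases h2 : v ∈ S <;> simp [h1, h2]
    have hcov : ∀ ⦃u v⦄, G.Adj u v → 1 ≤ f u + f v := by
      have key : ∀ a b : V, G.Adj a b →
          (1:ℝ) ≤ (if b ∈ N then (1:ℝ) else 0) + 1 - (if a ∈ S then 1 else 0) := by
        intro a b hab
        by_cases ha : a ∈ S
        · have hb : b ∈ N := Finset.mem_biUnion.mpr
            ⟨a, ha, (G.mem_neighborFinset a b).mpr hab⟩
          simp [ha, hb]
        · simp only [ha, if_false]
          by_cases hb : b ∈ N <;> simp [hb]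
      intro u v huv
      have h1 := key u v huv
      have h2 := key v u huv.symm
      simp only [hf]
      linarith
    have hsum : ∑ v, f v < (Fintype.card V : ℝ) / 2 := by
      have e1 : ∑ v, (if v ∈ N then (1:ℝ) else 0) = N.card := by
        rw [Finset.sum_ite_mem, Finset.univ_inter, Finset.sum_const]
        simp
      have e2 : ∑ v, (if v ∈ S then (1:ℝ) else 0) = S.card := by
        rw [Finset.sum_ite_mem, Finset.univ_inter, Finset.sum_const]
        simp
      have e3 : ∑ v, f v
          = ((N.card : ℝ) + Fintype.card V - S.card) / 2 := by
        simp only [hf]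
        rw [← Finset.sum_div]
        rw [Finset.sum_sub_distrib, Finset.sum_add_distrib, e1, e2,
          Finset.sum_const, Finset.card_univ, nsmul_eq_mul, mul_one]
      rw [e3]
      have : (N.card : ℝ) < S.card := by exact_mod_cast hc
      linarith
    have hfc := h f hmem hcov hsum.le
    rw [hfc] at hsum
    rw [Finset.sum_const, Finset.card_univ, nsmul_eq_mul] at hsum
    linarith
  -- Step 2: get a "successor" function by Hall's theorem.
  obtain ⟨f, finj, hfmem⟩ :=
    (Finset.all_card_le_biUnion_card_iff_exists_injective (fun v => G.neighborFinset v)).mp hall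
  have fbij : Function.Bijective f := Finite.injective_iff_bijective.mp finj
  -- The matching
  set m : Sym2 V → ℝ := fun e => (∑ u, (if s(u, f u) = e then (1:ℝ) else 0)) / 2 with hm
  have hadj : ∀ v, G.Adj v (f v) := fun v => (G.mem_neighborFinset v (f v)).mp (hfmem v)
  refine ⟨m, ?_, ?_⟩
  · intro e he
    induction e with
    | _ a b =>
      have hab : G.Adj a b := he
      have hne : a ≠ b := hab.ne
      have hsub : (Finset.univ.filter fun u => s(u, f u) = s(a, b)) ⊆ {a, b} := by
        intro u hu
        simp only [Finset.mem_filter, Finset.mem_univ, true_and, Sym2.eq_iff] at hu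
        rcases hu with ⟨h1, _⟩ | ⟨h1, _⟩ <;> simp [h1]
      have hcard : (Finset.univ.filter fun u => s(u, f u) = s(a, b)).card ≤ 2 := by
        calc (Finset.univ.filter fun u => s(u, f u) = s(a, b)).card
            ≤ ({a, b} : Finset V).card := Finset.card_le_card hsub
          _ ≤ 2 := Finset.card_insert_le _ _ |>.trans (by simp)
      have hval : m s(a, b)
          = ((Finset.univ.filter fun u => s(u, f u) = s(a, b)).card : ℝ) / 2 := by
        simp only [hm, Finset.sum_boole]
      set c := (Finset.univ.filter fun u => s(u, f u) = s(a, b)).card with hcdef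
      interval_cases c <;> rw [hval] <;> simp
  · intro v
    have key : ∀ w ∈ G.neighborFinset v,
        m s(v, w) = ((if f v = w then (1:ℝ) else 0) + (if f w = v then 1 else 0)) / 2 := by
      intro w hw
      have hvw : v ≠ w := (G.mem_neighborFinset v w |>.mp hw).ne
      simp only [hm]
      congr 1
      have : ∀ u : V, (if s(u, f u) = s(v, w) then (1:ℝ) else 0)
          = (if u = v then (if f v = w then (1:ℝ) else 0) else 0)
            + (if u = w then (if f w = v then (1:ℝ) else 0) else 0) := by
        intro u
        simp only [Sym2.eq_iff]
        by_cases h1 : u = v <;> by_cases h2 : u = w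
        · exact absurd (h1 ▸ h2 : u = w) (h1 ▸ hvw)
        · subst h1
          by_cases h3 : f u = w <;> simp [h2, h3]
        · subst h2
          by_cases h3 : f u = v <;> simp [h1, h3]
        · simp [h1, h2]
      rw [Finset.sum_congr rfl fun u _ => this u, Finset.sum_add_distrib,
        Finset.sum_ite_eq' Finset.univ v, Finset.sum_ite_eq' Finset.univ w]
      simp
    rw [Finset.sum_congr rfl key]
    obtain ⟨w0, hw0⟩ := fbij.surjective v
    have hw0mem : w0 ∈ G.neighborFinset v := by
      rw [G.mem_neighborFinset]
      exact (hw0 ▸ hadj w0).symm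
    have e1 : ∑ w ∈ G.neighborFinset v, (if f v = w then (1:ℝ) else 0) = 1 := by
      rw [Finset.sum_ite_eq (G.neighborFinset v) (f v) (fun _ => (1:ℝ))]
      simp [hfmem v]
    have e2 : ∑ w ∈ G.neighborFinset v, (if f w = v then (1:ℝ) else 0) = 1 := by
      have : ∀ w : V, (if f w = v then (1:ℝ) else 0) = (if w = w0 then 1 else 0) := by
        intro w
        congr 1
        simp only [eq_iff_iff]
        constructor
        · intro hwv; exact finj (hwv.trans hw0.symm)
        · intro hww0; subst hww0; exact hw0
      rw [Finset.sum_congr rfl fun w _ => this w,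
        Finset.sum_ite_eq' (G.neighborFinset v) w0]
      simp [hw0mem]
    rw [← Finset.sum_div, Finset.sum_add_distrib, e1, e2]
    norm_num

end Stmt
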